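/- For every t ∈ (0,1), the series ∑_{i=1}^∞ X_1(t) X_2(t) ⋯ X_i(t) converges. -/

import Mathlib

/-- Iterated logarithmic functions: `X 1 t = (1 - log t)⁻¹`, `X i = X 1 ∘ X (i-1)`. -/
noncomputable def X : ℕ → ℝ → ℝ
  | 0, t => t
  | n + 1, t => (1 - Real.log (X n t))⁻¹

/-! Write `eₙ = -log Xₙ(t) > 0` and `Pₙ = X₁(t) ⋯ Xₙ(t)`, so that `eₙ₊₁ = log (1 + eₙ)` and
`Pₙ₊₁ = Pₙ / (1 + eₙ)`. The Padé bound `log (1 + e) ≥ 2e / (2 + e)` gives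
`Pₙ₊₁ + 2Pₙ₊₁ / eₙ₊₁ ≤ 2Pₙ / eₙ`, so the partial sums of `∑ Pₙ₊₁` telescope below `2P₀ / e₀`. -/

open Real Finset

/-- Keep the first term of the nonnegative series `log (1 + e) = ∑ 2/(2k+1) (e / (2 + e))^(2k+1)`. -/
lemma two_mul_le_two_add_mul_log_one_add {e : ℝ} (he : 0 < e) :
    2 * e ≤ (2 + e) * log (1 + e) := by
  have hsum := hasSum_log_one_add_inv (inv_pos.mpr he)
  rw [inv_inv] at hsum
  have hfirst : 2 * e / (2 + e) ≤ log (1 + e) := by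
    refine le_of_eq_of_le ?_ (le_hasSum hsum 0 fun k _ => by positivity)
    have h2e : 2 + e ≠ 0 := by positivity
    norm_num
    field_simp
  exact (div_le_iff₀' (by linarith)).mp hfirst

lemma inv_one_add_mul_one_add_two_div_log_le {e : ℝ} (he : 0 < e) :
    (1 + e)⁻¹ * (1 + 2 / log (1 + e)) ≤ 2 / e := by
  have hL : 0 < log (1 + e) := log_pos (by linarith)
  have hpade := two_mul_le_two_add_mul_log_one_add he
  rw [one_add_div hL.ne', ← div_eq_inv_mul, div_div, div_le_div_iff₀ (by positivity) he]
  nlinarith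

lemma summable_of_add_succ_le {f g : ℕ → ℝ} (hf : ∀ n, 0 ≤ f n) (hg : ∀ n, 0 ≤ g n)
    (h : ∀ n, f n + g (n + 1) ≤ g n) : Summable f := by
  have hpartial : ∀ n, ∑ i ∈ range n, f i + g n ≤ g 0 := by
    intro n
    induction n with
    | zero => simp
    | succ n ih => rw [sum_range_succ]; linarith [h n]
  exact summable_of_sum_range_le hf fun n => by linarith [hpartial n, hg n]

section

variable {t : ℝ}

lemma X_mem_Ioo (ht : t ∈ Set.Ioo 0 1) (n : ℕ) : X n t ∈ Set.Ioo 0 1 := by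
  induction n with
  | zero => exact ht
  | succ n ih =>
    have hlog : log (X n t) < 0 := log_neg ih.1 ih.2
    exact ⟨inv_pos.mpr (by linarith), inv_lt_one_of_one_lt₀ (by linarith)⟩

lemma neg_log_X_pos (ht : t ∈ Set.Ioo 0 1) (n : ℕ) : 0 < -log (X n t) :=
  neg_pos.mpr (log_neg (X_mem_Ioo ht n).1 (X_mem_Ioo ht n).2)

lemma X_succ (n : ℕ) : X (n + 1) t = (1 + -log (X n t))⁻¹ := by
  rw [X, sub_eq_add_neg]

lemma neg_log_X_succ (n : ℕ) : -log (X (n + 1) t) = log (1 + -log (X n t)) := by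
  rw [X_succ, log_inv, neg_neg]

lemma prod_X_nonneg (ht : t ∈ Set.Ioo 0 1) (n : ℕ) : 0 ≤ ∏ j ∈ Icc 1 n, X j t :=
  prod_nonneg fun j _ => (X_mem_Ioo ht j).1.le

lemma prod_X_add_two_mul_div_le (ht : t ∈ Set.Ioo 0 1) (n : ℕ) :
    ∏ j ∈ Icc 1 (n + 1), X j t + 2 * (∏ j ∈ Icc 1 (n + 1), X j t) / -log (X (n + 1) t)
      ≤ 2 * (∏ j ∈ Icc 1 n, X j t) / -log (X n t) := by
  rw [prod_Icc_succ_top (Nat.le_add_left 1 n), neg_log_X_succ, X_succ]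
  set P := ∏ j ∈ Icc 1 n, X j t
  calc P * (1 + -log (X n t))⁻¹ + 2 * (P * (1 + -log (X n t))⁻¹) / log (1 + -log (X n t))
      = P * ((1 + -log (X n t))⁻¹ * (1 + 2 / log (1 + -log (X n t)))) := by ring
    _ ≤ P * (2 / -log (X n t)) :=
        mul_le_mul_of_nonneg_left (inv_one_add_mul_one_add_two_div_log_le (neg_log_X_pos ht n))
          (prod_X_nonneg ht n)
    _ = 2 * P / -log (X n t) := by ring

end

theorem summable_prod_X (t : ℝ) (ht : t ∈ Set.Ioo (0:ℝ) 1) :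
    Summable (fun i : ℕ => ∏ j ∈ Finset.Icc 1 (i + 1), X j t) :=
  summable_of_add_succ_le (fun n => prod_X_nonneg ht (n + 1))
    (fun n => div_nonneg (mul_nonneg zero_le_two (prod_X_nonneg ht n)) (neg_log_X_pos ht n).le)
    (prod_X_add_two_mul_div_le ht)
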